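/- arXiv:1512.01485 — 2 statements merged into one kernel-verified Lean document; each statement's English description precedes it below -/
import Mathlib

section
/- Consider a convex pentagon with vertices c_0, ..., c_4 and all five diagonals available, where a triangulation uses exactly two non-crossing diagonals, each labelled, and a flip replaces one diagonal by the unique other diagonal completing a triangulation, transferring its label. Then for any two labelled diagonals a, b of a triangulation, their labels can be interchanged by a sequence of exactly 5 flips returning to the same pair of diagonals with labels swapped. -/
open scoped Classical

/-- `x` lies strictly inside the (clockwise) arc from `a` to `b` of the convex `n`-gon
with vertices cyclically labelled by `Fin n`. -/
def ArcMem {n : ℕ} (a b x : Fin n) : Prop :=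
  0 < (x - a).val ∧ (x - a).val < (b - a).val

/-- Two chords of the convex `n`-gon cross (their interiors intersect). -/
def Crossing {n : ℕ} (e f : Sym2 (Fin n)) : Prop :=
  ∃ a b c d : Fin n, e = s(a, b) ∧ f = s(c, d) ∧ ArcMem a b c ∧ ArcMem b a d

/-- `e` is a diagonal of the convex `n`-gon: a chord joining two distinct,
non-adjacent vertices. -/
def IsPolygonDiagonal {n : ℕ} [NeZero n] (e : Sym2 (Fin n)) : Prop :=
  ∃ a b : Fin n, e = s(a, b) ∧ a ≠ b ∧ b ≠ a + 1 ∧ a ≠ b + 1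

/-- An edge-labelled triangulation of a convex `n`-gon: a maximal set of `n - 3`
pairwise non-crossing diagonals, each carrying a distinct label from `{1, …, n - 3}`. -/
structure LabelledTriangulation (n : ℕ) [NeZero n] where
  diags : Finset (Sym2 (Fin n))
  isDiag : ∀ e ∈ diags, IsPolygonDiagonal e
  noncrossing : ∀ e ∈ diags, ∀ f ∈ diags, e ≠ f → ¬ Crossing e f
  card_diags : diags.card = n - 3
  label : Sym2 (Fin n) → ℕ
  label_inj : Set.InjOn label (diags : Set (Sym2 (Fin n)))
  label_range : ∀ e ∈ diags, label e ∈ Finset.Icc 1 (n - 3)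

/-- A flip in an edge-labelled triangulation of a convex polygon: one diagonal is
replaced by the unique other diagonal of the quadrilateral left by its removal, the new
diagonal inheriting the removed diagonal's label; all other diagonals keep their labels. -/
def Flip {n : ℕ} [NeZero n] (T T' : LabelledTriangulation n) : Prop :=
  ∃ e e' : Sym2 (Fin n), e ∈ T.diags ∧ e' ∉ T.diags ∧
    T'.diags = insert e' (T.diags.erase e) ∧
    T'.label e' = T.label e ∧
    ∀ f ∈ T.diags.erase e, T'.label f = T.label f

namespace PentagonSwap

instance arcDec {n : ℕ} (a b x : Fin n) : Decidable (ArcMem a b x) :=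
  inferInstanceAs (Decidable (0 < (x - a).val ∧ (x - a).val < (b - a).val))
instance crossDec {n : ℕ} (e f : Sym2 (Fin n)) : Decidable (Crossing e f) :=
  inferInstanceAs (Decidable (∃ a b c d : Fin n, e = s(a, b) ∧ f = s(c, d) ∧ ArcMem a b c ∧ ArcMem b a d))
instance diagDec {n : ℕ} [NeZero n] (e : Sym2 (Fin n)) : Decidable (IsPolygonDiagonal e) :=
  inferInstanceAs (Decidable (∃ a b : Fin n, e = s(a, b) ∧ a ≠ b ∧ b ≠ a + 1 ∧ a ≠ b + 1))

/-- The five diagonals of the pentagon. -/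
def D (i : Fin 5) : Sym2 (Fin 5) := s(i, i + 2)

lemma hdiag : ∀ i : Fin 5, IsPolygonDiagonal (D i) := by decide
lemma hnc1 : ∀ j : Fin 5, ¬ Crossing (D j) (D (j + 2)) := by decide
lemma hnc2 : ∀ j : Fin 5, ¬ Crossing (D (j + 2)) (D j) := by decide
lemma hne : ∀ j : Fin 5, D j ≠ D (j + 2) := by decide
lemma hnotmem : ∀ j : Fin 5, D (j + 4) ∉ ({D j, D (j + 2)} : Finset (Sym2 (Fin 5))) := by decide
lemma hinsert : ∀ j : Fin 5, ({D (j + 2), D (j + 2 + 2)} : Finset (Sym2 (Fin 5))) =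
    insert (D (j + 4)) (({D j, D (j + 2)} : Finset (Sym2 (Fin 5))).erase (D j)) := by decide
lemma hne42 : ∀ j : Fin 5, D (j + 4) ≠ D (j + 2) := by decide
lemma hc42 : ∀ j : Fin 5, D (j + 4) = D (j + 2 + 2) := by decide
lemma hten : ∀ i : Fin 5, i + 2 + 2 + 2 + 2 + 2 = i := by decide
lemma hclass : ∀ a b : Sym2 (Fin 5), IsPolygonDiagonal a → IsPolygonDiagonal b → a ≠ b →
    ¬ Crossing a b → ¬ Crossing b a →
    ∃ i : Fin 5, (a = D i ∧ b = D (i + 2)) ∨ (b = D i ∧ a = D (i + 2)) := by decide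

/-- The labelled triangulation `{D j, D (j+2)}` with labels `x`, `y`. -/
def mk (j : Fin 5) (x y : ℕ) (hxy : x ≠ y)
    (hx : x ∈ Finset.Icc 1 2) (hy : y ∈ Finset.Icc 1 2) : LabelledTriangulation 5 where
  diags := {D j, D (j + 2)}
  isDiag := by
    intro e he
    rcases Finset.mem_insert.mp he with h | h
    · exact h ▸ hdiag j
    · exact (Finset.mem_singleton.mp h) ▸ hdiag (j + 2)
  noncrossing := by
    intro e he f hf hef
    rcases Finset.mem_insert.mp he with rfl | he' <;>
      rcases Finset.mem_insert.mp hf with rfl | hf'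
    · exact absurd rfl hef
    · rw [Finset.mem_singleton.mp hf']; exact hnc1 j
    · rw [Finset.mem_singleton.mp he']; exact hnc2 j
    · exact absurd ((Finset.mem_singleton.mp he').trans
        (Finset.mem_singleton.mp hf').symm) hef
  card_diags := by
    rw [Finset.card_insert_of_notMem (by simpa using hne j), Finset.card_singleton]
  label := fun s => if s = D j then x else if s = D (j + 2) then y else 0
  label_inj := by
    intro e he f hf hef
    simp only [Finset.coe_insert, Finset.coe_singleton, Set.mem_insert_iff,
      Set.mem_singleton_iff] at he hf
    rcases he with rfl | rfl <;> rcases hf with rfl | rfl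
    · rfl
    · exfalso
      replace hef : (if D j = D j then x else if D j = D (j + 2) then y else 0)
          = (if D (j + 2) = D j then x else if D (j + 2) = D (j + 2) then y else 0) := hef
      rw [if_pos rfl, if_neg (hne j).symm, if_pos rfl] at hef
      exact hxy hef
    · exfalso
      replace hef : (if D (j + 2) = D j then x else if D (j + 2) = D (j + 2) then y else 0)
          = (if D j = D j then x else if D j = D (j + 2) then y else 0) := hef
      rw [if_pos rfl, if_neg (hne j).symm, if_pos rfl] at hef
      exact hxy hef.symm
    · rfl
  label_range := by
    intro e he
    rcases Finset.mem_insert.mp he with rfl | h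
    · show (if D j = D j then x else if D j = D (j + 2) then y else 0) ∈ Finset.Icc 1 (5 - 3)
      rw [if_pos rfl]; simpa using hx
    · rw [Finset.mem_singleton.mp h]
      show (if D (j + 2) = D j then x else if D (j + 2) = D (j + 2) then y else 0)
        ∈ Finset.Icc 1 (5 - 3)
      rw [if_neg (hne j).symm, if_pos rfl]; simpa using hy

lemma mk_label₁ (j : Fin 5) (x y : ℕ) (h1 : x ≠ y) (h2 : x ∈ Finset.Icc 1 2)
    (h3 : y ∈ Finset.Icc 1 2) : (mk j x y h1 h2 h3).label (D j) = x := if_pos rfl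

lemma mk_label₂ (j : Fin 5) (x y : ℕ) (h1 : x ≠ y) (h2 : x ∈ Finset.Icc 1 2)
    (h3 : y ∈ Finset.Icc 1 2) : (mk j x y h1 h2 h3).label (D (j + 2)) = y := by
  show (if D (j + 2) = D j then x else if D (j + 2) = D (j + 2) then y else 0) = y
  rw [if_neg (hne j).symm, if_pos rfl]

lemma flip_step (T : LabelledTriangulation 5) (j : Fin 5) (u v : ℕ)
    (hvu : v ≠ u) (hv : v ∈ Finset.Icc 1 2) (hu : u ∈ Finset.Icc 1 2)
    (hd : T.diags = {D j, D (j + 2)})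
    (h1 : T.label (D j) = u) (h2 : T.label (D (j + 2)) = v) :
    Flip T (mk (j + 2) v u hvu hv hu) := by
  refine ⟨D j, D (j + 4), ?_, ?_, ?_, ?_, ?_⟩
  · rw [hd]; exact Finset.mem_insert_self _ _
  · rw [hd]; exact hnotmem j
  · rw [hd]; exact hinsert j
  · show (if D (j + 4) = D (j + 2) then v else if D (j + 4) = D (j + 2 + 2) then u else 0)
      = T.label (D j)
    rw [if_neg (hne42 j), if_pos (hc42 j), h1]
  · intro f hf
    rw [hd] at hf
    obtain ⟨hfne, hfmem⟩ := Finset.mem_erase.mp hf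
    have hf' : f = D (j + 2) := by
      rcases Finset.mem_insert.mp hfmem with h | h
      · exact absurd h hfne
      · exact Finset.mem_singleton.mp h
    subst hf'
    show (if D (j + 2) = D (j + 2) then v else if D (j + 2) = D (j + 2 + 2) then u else 0)
      = T.label (D (j + 2))
    rw [if_pos rfl, h2]

lemma core (T : LabelledTriangulation 5) (i : Fin 5)
    (hT : T.diags = {D i, D (i + 2)}) :
    ∃ (l : List (LabelledTriangulation 5)) (hl : l ≠ []),
      List.Chain Flip T l ∧ l.length = 5 ∧
      (l.getLast hl).diags = T.diags ∧
      (l.getLast hl).label (D i) = T.label (D (i + 2)) ∧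
      (l.getLast hl).label (D (i + 2)) = T.label (D i) := by
  set x := T.label (D i) with hx'
  set y := T.label (D (i + 2)) with hy'
  have hDi : D i ∈ T.diags := by rw [hT]; exact Finset.mem_insert_self _ _
  have hDi2 : D (i + 2) ∈ T.diags := by
    rw [hT]; exact Finset.mem_insert_of_mem (Finset.mem_singleton_self _)
  have hxy : x ≠ y := by
    intro h
    exact hne i (T.label_inj (by exact_mod_cast hDi) (by exact_mod_cast hDi2) h)
  have hx : x ∈ Finset.Icc 1 2 := T.label_range _ hDi
  have hy : y ∈ Finset.Icc 1 2 := T.label_range _ hDi2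
  refine ⟨[mk (i + 2) y x hxy.symm hy hx,
           mk (i + 2 + 2) x y hxy hx hy,
           mk (i + 2 + 2 + 2) y x hxy.symm hy hx,
           mk (i + 2 + 2 + 2 + 2) x y hxy hx hy,
           mk i y x hxy.symm hy hx], by simp, ?_, rfl, ?_, ?_, ?_⟩
  · refine List.Chain.cons ?_ (List.Chain.cons ?_ (List.Chain.cons ?_
      (List.Chain.cons ?_ (List.Chain.cons ?_ List.Chain.nil))))
    · exact flip_step T i x y hxy.symm hy hx hT rfl rfl
    · exact flip_step (mk (i + 2) y x hxy.symm hy hx) (i + 2) y x hxy hx hy rfl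
        (mk_label₁ (i + 2) y x hxy.symm hy hx) (mk_label₂ (i + 2) y x hxy.symm hy hx)
    · exact flip_step (mk (i + 2 + 2) x y hxy hx hy) (i + 2 + 2) x y hxy.symm hy hx rfl
        (mk_label₁ (i + 2 + 2) x y hxy hx hy) (mk_label₂ (i + 2 + 2) x y hxy hx hy)
    · exact flip_step (mk (i + 2 + 2 + 2) y x hxy.symm hy hx) (i + 2 + 2 + 2) y x hxy hx hy rfl
        (mk_label₁ (i + 2 + 2 + 2) y x hxy.symm hy hx)
        (mk_label₂ (i + 2 + 2 + 2) y x hxy.symm hy hx)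
    · have h := flip_step (mk (i + 2 + 2 + 2 + 2) x y hxy hx hy) (i + 2 + 2 + 2 + 2) x y
        hxy.symm hy hx rfl (mk_label₁ (i + 2 + 2 + 2 + 2) x y hxy hx hy)
        (mk_label₂ (i + 2 + 2 + 2 + 2) x y hxy hx hy)
      rwa [hten i] at h
  · show ({D i, D (i + 2)} : Finset (Sym2 (Fin 5))) = T.diags
    exact hT.symm
  · exact mk_label₁ i y x hxy.symm hy hx
  · exact mk_label₂ i y x hxy.symm hy hx

end PentagonSwap

open PentagonSwap in
/-- In a convex pentagon (where a triangulation consists of exactly two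
non-crossing labelled diagonals and a flip replaces one diagonal by the unique other
diagonal completing a triangulation, transferring its label), the labels of the two
diagonals `a, b` of any triangulation can be interchanged by a sequence of exactly `5`
flips that returns to the same pair of diagonals with the labels swapped. -/
theorem pentagon_swap_labels_in_five_flips
    (T : LabelledTriangulation 5) (a b : Sym2 (Fin 5))
    (ha : a ∈ T.diags) (hb : b ∈ T.diags) (hab : a ≠ b) :
    ∃ (l : List (LabelledTriangulation 5)) (hl : l ≠ []),
      List.Chain Flip T l ∧ l.length = 5 ∧
      (l.getLast hl).diags = T.diags ∧
      (l.getLast hl).label a = T.label b ∧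
      (l.getLast hl).label b = T.label a ∧
      ∀ f ∈ T.diags, f ≠ a → f ≠ b → (l.getLast hl).label f = T.label f := by
  have hTd : T.diags = {a, b} := by
    refine (Finset.eq_of_subset_of_card_le ?_ ?_).symm
    · intro e he
      rcases Finset.mem_insert.mp he with rfl | h
      · exact ha
      · exact (Finset.mem_singleton.mp h) ▸ hb
    · rw [T.card_diags, Finset.card_pair hab]
  obtain ⟨i, hcase⟩ := hclass a b (T.isDiag a ha) (T.isDiag b hb) hab
    (T.noncrossing a ha b hb hab) (T.noncrossing b hb a ha hab.symm)
  have hvac : ∀ (L : LabelledTriangulation 5),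
      ∀ f ∈ T.diags, f ≠ a → f ≠ b → L.label f = T.label f := by
    intro L f hf hfa hfb
    rw [hTd] at hf
    rcases Finset.mem_insert.mp hf with rfl | h
    · exact absurd rfl hfa
    · exact absurd (Finset.mem_singleton.mp h) hfb
  rcases hcase with ⟨rfl, rfl⟩ | ⟨rfl, rfl⟩
  · obtain ⟨l, hl, h1, h2, h3, h4, h5⟩ := core T i hTd
    exact ⟨l, hl, h1, h2, h3, h4, h5, hvac _⟩
  · obtain ⟨l, hl, h1, h2, h3, h4, h5⟩ := core T i (hTd.trans (Finset.pair_comm _ _))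
    exact ⟨l, hl, h1, h2, h3, h5, h4, hvac _⟩
end

section
/- Let X be a triangle with vertices v_0, x, y containing two interior points v_a, v_b, with edges x v_a and y v_b present, such that the five segments v_0 v_a, v_0 v_b, x v_b, y v_a, v_a v_b each cross neither x v_a nor y v_b. Then X, viewed as a pseudo-pentagon, has exactly five bitangents, namely these five segments. -/
open scoped Classical

/-- Points in the Euclidean plane. -/
abbrev Pt := EuclideanSpace ℝ (Fin 2)

/-- Two closed segments cross: their open interiors intersect. -/
def Crosses (p q r s : Pt) : Prop :=
  (openSegment ℝ p q ∩ openSegment ℝ r s).Nonempty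

/-- The boundary edges of the pseudo-pentagon obtained from the triangle `v₀ x y`
together with the hanging edges `x vₐ` and `y v_b`; its five convex corners are
`v₀, x, y, vₐ, v_b` (the latter two being degree-one vertices). -/
def PentBoundary (v₀ x y va vb : Pt) : Set (Sym2 Pt) :=
  {s(v₀, x), s(x, y), s(y, v₀), s(x, va), s(y, vb)}

/-- The bitangents of this pseudo-pentagon: since every vertex involved is a corner or
has degree one, a diagonal (a segment joining two of the five vertices that is not a
boundary edge) is a bitangent iff it crosses neither of the boundary edges `x vₐ` and
`y v_b`. -/
def PentBitangents (v₀ x y va vb : Pt) : Set (Sym2 Pt) :=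
  {e : Sym2 Pt | ∃ p q : Pt, e = s(p, q) ∧ p ≠ q ∧
    p ∈ ({v₀, x, y, va, vb} : Set Pt) ∧ q ∈ ({v₀, x, y, va, vb} : Set Pt) ∧
    e ∉ PentBoundary v₀ x y va vb ∧
    ¬ Crosses p q x va ∧ ¬ Crosses p q y vb}

set_option maxHeartbeats 1000000

lemma vertex_notMem_interior (a b c : Pt)
    (h : ¬ Collinear ℝ ({a, b, c} : Set Pt)) (i : Fin 3) :
    (![a, b, c] i) ∉ interior (convexHull ℝ ({a, b, c} : Set Pt)) := by
  have hai : AffineIndependent ℝ ![a, b, c] :=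
    affineIndependent_iff_not_collinear_set.mpr h
  have htop : affineSpan ℝ (Set.range ![a, b, c]) = ⊤ := by
    rw [hai.affineSpan_eq_top_iff_card_eq_finrank_add_one]
    simp [finrank_euclideanSpace]
  let B : AffineBasis (Fin 3) ℝ Pt := ⟨![a, b, c], hai, htop⟩
  have hr : Set.range ⇑B = ({a, b, c} : Set Pt) := by
    have hB : ⇑B = ![a, b, c] := rfl
    rw [hB]
    simp only [Matrix.range_cons, Matrix.range_empty, Set.union_empty]
    ext p; simp; tauto
  rw [← hr, B.interior_convexHull]
  intro hmem
  obtain ⟨j, hj⟩ : ∃ j : Fin 3, j ≠ i := by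
    fin_cases i
    · exact ⟨1, by decide⟩
    · exact ⟨0, by decide⟩
    · exact ⟨0, by decide⟩
  have := hmem j
  rw [show (![a, b, c] i) = B i from rfl, B.coord_apply_ne hj] at this
  exact lt_irrefl 0 this

/-- Let `X` be a triangle with vertices `v₀, x, y` containing two
interior points `vₐ, v_b`, with edges `x vₐ` and `y v_b` present, such that the five
segments `v₀ vₐ`, `v₀ v_b`, `x v_b`, `y vₐ`, `vₐ v_b` each cross neither `x vₐ` nor
`y v_b`.  Then `X`, viewed as a pseudo-pentagon, has exactly five bitangents, namely
these five segments. -/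
theorem triangle_two_interior_points_five_bitangents
    (v₀ x y va vb : Pt)
    (htri : ¬ Collinear ℝ ({v₀, x, y} : Set Pt))
    (hva : va ∈ interior (convexHull ℝ ({v₀, x, y} : Set Pt)))
    (hvb : vb ∈ interior (convexHull ℝ ({v₀, x, y} : Set Pt)))
    (hdist : va ≠ vb)
    (h1 : ¬ Crosses v₀ va x va ∧ ¬ Crosses v₀ va y vb)
    (h2 : ¬ Crosses v₀ vb x va ∧ ¬ Crosses v₀ vb y vb)
    (h3 : ¬ Crosses x vb x va ∧ ¬ Crosses x vb y vb)
    (h4 : ¬ Crosses y va x va ∧ ¬ Crosses y va y vb)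
    (h5 : ¬ Crosses va vb x va ∧ ¬ Crosses va vb y vb) :
    PentBitangents v₀ x y va vb =
      ({s(v₀, va), s(v₀, vb), s(x, vb), s(y, va), s(va, vb)} : Set (Sym2 Pt)) ∧
    (PentBitangents v₀ x y va vb).ncard = 5 := by
  have hv0x : v₀ ≠ x := by
    rintro rfl
    exact htri (by simpa using collinear_pair ℝ v₀ y)
  have hv0y : v₀ ≠ y := by
    rintro rfl
    exact htri (by
      have : ({v₀, x, v₀} : Set Pt) = {v₀, x} := by ext p; simp; try tauto
      rw [this]; exact collinear_pair ℝ v₀ x)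
  have hxy : x ≠ y := by
    rintro rfl
    exact htri (by
      have : ({v₀, x, x} : Set Pt) = {v₀, x} := by ext p; simp; try tauto
      rw [this]; exact collinear_pair ℝ v₀ x)
  have hav0 : va ≠ v₀ := fun h => vertex_notMem_interior v₀ x y htri 0 (by simpa [← h] using hva)
  have hax : va ≠ x := fun h => vertex_notMem_interior v₀ x y htri 1 (by simpa [← h] using hva)
  have hay : va ≠ y := fun h => vertex_notMem_interior v₀ x y htri 2 (by simpa [← h] using hva)
  have hbv0 : vb ≠ v₀ := fun h => vertex_notMem_interior v₀ x y htri 0 (by simpa [← h] using hvb)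
  have hbx : vb ≠ x := fun h => vertex_notMem_interior v₀ x y htri 1 (by simpa [← h] using hvb)
  have hby : vb ≠ y := fun h => vertex_notMem_interior v₀ x y htri 2 (by simpa [← h] using hvb)
  have heq : PentBitangents v₀ x y va vb =
      ({s(v₀, va), s(v₀, vb), s(x, vb), s(y, va), s(va, vb)} : Set (Sym2 Pt)) := by
    ext e
    constructor
    · rintro ⟨p, q, rfl, hne, hp, hq, hbd, -, -⟩
      clear htri hva hvb h1 h2 h3 h4 h5 hdist hv0x hv0y hxy hav0 hax hay hbv0 hbx hby
      simp only [Set.mem_insert_iff, Set.mem_singleton_iff] at hp hq ⊢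
      simp only [PentBoundary, Set.mem_insert_iff, Set.mem_singleton_iff, Sym2.eq_iff] at hbd
      rcases hp with rfl | rfl | rfl | rfl | rfl <;>
        rcases hq with rfl | rfl | rfl | rfl | rfl <;>
        simp_all [Sym2.eq_iff]
    · intro he
      simp only [Set.mem_insert_iff, Set.mem_singleton_iff] at he
      rcases he with rfl | rfl | rfl | rfl | rfl
      · exact ⟨v₀, va, rfl, Ne.symm hav0, by simp, by simp,
          by simp only [PentBoundary, Set.mem_insert_iff, Set.mem_singleton_iff, Sym2.eq_iff];
             tauto, h1.1, h1.2⟩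
      · exact ⟨v₀, vb, rfl, Ne.symm hbv0, by simp, by simp,
          by simp only [PentBoundary, Set.mem_insert_iff, Set.mem_singleton_iff, Sym2.eq_iff];
             tauto, h2.1, h2.2⟩
      · exact ⟨x, vb, rfl, Ne.symm hbx, by simp, by simp,
          by simp only [PentBoundary, Set.mem_insert_iff, Set.mem_singleton_iff, Sym2.eq_iff];
             tauto, h3.1, h3.2⟩
      · exact ⟨y, va, rfl, Ne.symm hay, by simp, by simp,
          by simp only [PentBoundary, Set.mem_insert_iff, Set.mem_singleton_iff, Sym2.eq_iff];
             tauto, h4.1, h4.2⟩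
      · exact ⟨va, vb, rfl, hdist, by simp, by simp,
          by simp only [PentBoundary, Set.mem_insert_iff, Set.mem_singleton_iff, Sym2.eq_iff];
             tauto, h5.1, h5.2⟩
  refine ⟨heq, ?_⟩
  rw [heq]
  have n1 : s(v₀, va) ∉ ({s(v₀, vb), s(x, vb), s(y, va), s(va, vb)} : Set (Sym2 Pt)) := by
    simp only [Set.mem_insert_iff, Set.mem_singleton_iff, Sym2.eq_iff]; tauto
  have n2 : s(v₀, vb) ∉ ({s(x, vb), s(y, va), s(va, vb)} : Set (Sym2 Pt)) := by
    simp only [Set.mem_insert_iff, Set.mem_singleton_iff, Sym2.eq_iff]; tauto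
  have n3 : s(x, vb) ∉ ({s(y, va), s(va, vb)} : Set (Sym2 Pt)) := by
    simp only [Set.mem_insert_iff, Set.mem_singleton_iff, Sym2.eq_iff]; tauto
  have n4 : s(y, va) ∉ ({s(va, vb)} : Set (Sym2 Pt)) := by
    simp only [Set.mem_singleton_iff, Sym2.eq_iff]; tauto
  rw [Set.ncard_insert_of_notMem n1, Set.ncard_insert_of_notMem n2,
    Set.ncard_insert_of_notMem n3, Set.ncard_insert_of_notMem n4, Set.ncard_singleton]
end
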